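/- Let 1 ≤ k ≤ d be integers and u ∈ ℝ^d with u ≠ 0. Then inf{ ‖a‖₂ + √k · ‖u − a‖_∞ : a ∈ ℝ^d } < √2 · ( ∑_{i=1}^k (|u|↓_i)² )^{1/2}, i.e. the dual elastic-net norm of u is strictly less than √2 times the ℓ2 norm of the k largest-magnitude entries of u. -/

import Mathlib

/-- The nonincreasing rearrangement of the absolute values of `u`,
0-indexed: `absDown u i` is the `(i+1)`-th largest of `|u 0|, …, |u (d-1)|`. -/
noncomputable def absDown {d : ℕ} (u : Fin d → ℝ) (i : Fin d) : ℝ :=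
  |u (Tuple.sort (fun j => |u j|) i.rev)|

/-- 1-indexed access to the nonincreasing rearrangement: `zD u i = |u|↓_i` for `1 ≤ i ≤ d`. -/
noncomputable def zD {d : ℕ} (u : Fin d → ℝ) (i : ℕ) : ℝ :=
  if h : 1 ≤ i ∧ i ≤ d then absDown u ⟨i - 1, by omega⟩ else 0

/-- The unit ball of the k-support norm: the convex hull of
`S_k = {w : ‖w‖₀ ≤ k, ‖w‖₂ ≤ 1}`. -/
noncomputable def kSupBall (d k : ℕ) : Set (EuclideanSpace ℝ (Fin d)) :=
  convexHull ℝ {w | (Finset.univ.filter fun i => w i ≠ 0).card ≤ k ∧ ‖w‖ ≤ 1}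

/-- The k-support norm, defined as the gauge of `kSupBall d k`. -/
noncomputable def kSupNorm (d k : ℕ) (w : EuclideanSpace ℝ (Fin d)) : ℝ :=
  gauge (kSupBall d k) w

/-- The elastic-net norm `max{‖w‖₂, ‖w‖₁ / √k}`. -/
noncomputable def elNet (d k : ℕ) (w : EuclideanSpace ℝ (Fin d)) : ℝ :=
  max ‖w‖ ((∑ i, |w i|) / Real.sqrt k)

/-!
Let `t` be the `k`-th largest `|uᵢ|` and let `a` be the soft thresholding of `u` at level `t`
(each coordinate shrunk towards `0` by `t`), so that `‖u - a‖_∞ ≤ t` and `‖a‖₂²` is the sum of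
`(|u|↓ᵢ - t)²` over the top `k` entries. Since `(g - t)² + t² ≤ g²` for `g ≥ t ≥ 0`, this gives
`‖a‖₂² + k t² ≤ ∑_{i ≤ k} (|u|↓ᵢ)²`, and `(‖a‖₂ + √k t)² ≤ 2 (‖a‖₂² + k t²)` concludes.
Equality in both steps would force `‖a‖₂ = √k t` together with `t = 0` or `|u|↓ᵢ = t` for
all `i ≤ k`, which is impossible for `u ≠ 0`.
-/

open Finset

section Thresholding

variable {ι : Type*}

theorem sum_sq_sub_add_card_mul_sq_le {S : Finset ι} {g : ι → ℝ} {t : ℝ} (ht : 0 ≤ t)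
    (hg : ∀ i ∈ S, t ≤ g i) :
    ∑ i ∈ S, (g i - t) ^ 2 + #S * t ^ 2 ≤ ∑ i ∈ S, g i ^ 2 := by
  rw [← nsmul_eq_mul, ← sum_const, ← sum_add_distrib]
  exact sum_le_sum fun i hi => by nlinarith [hg i hi]

theorem sum_sq_sub_add_card_mul_sq_lt {S : Finset ι} {g : ι → ℝ} {t : ℝ} (ht : 0 < t)
    (hg : ∀ i ∈ S, t ≤ g i) (hlt : ∃ i ∈ S, t < g i) :
    ∑ i ∈ S, (g i - t) ^ 2 + #S * t ^ 2 < ∑ i ∈ S, g i ^ 2 := by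
  rw [← nsmul_eq_mul, ← sum_const, ← sum_add_distrib]
  obtain ⟨j, hjS, hj⟩ := hlt
  exact sum_lt_sum (fun i hi => by nlinarith [hg i hi]) ⟨j, hjS, by nlinarith⟩

theorem sqrt_sum_sq_sub_add_sqrt_card_mul_lt {S : Finset ι} {g : ι → ℝ} {t : ℝ} (ht : 0 ≤ t)
    (hg : ∀ i ∈ S, t ≤ g i) (hpos : ∃ i ∈ S, 0 < g i) :
    √(∑ i ∈ S, (g i - t) ^ 2) + √(#S) * t < √2 * √(∑ i ∈ S, g i ^ 2) := by
  set A := ∑ i ∈ S, (g i - t) ^ 2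
  set B := ∑ i ∈ S, g i ^ 2
  obtain ⟨j, hjS, hj⟩ := hpos
  have hA : 0 ≤ A := by positivity
  have hB : 0 < B := sum_pos' (fun i _ => sq_nonneg _) ⟨j, hjS, by positivity⟩
  have hsqA := Real.sq_sqrt hA
  have hsqS := Real.sq_sqrt (Nat.cast_nonneg (α := ℝ) #S)
  rw [← Real.sqrt_mul zero_le_two, Real.lt_sqrt (by positivity)]
  rcases ht.eq_or_lt with rfl | ht
  · have hAB : A = B := by simp [A, B]
    rw [mul_zero, add_zero, hsqA]
    linarith
  have hAM : (√A + √(#S) * t) ^ 2 ≤ 2 * (A + #S * t ^ 2) := by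
    nlinarith [sq_nonneg (√A - √(#S) * t)]
  by_cases hlt : ∃ i ∈ S, t < g i
  · linarith [sum_sq_sub_add_card_mul_sq_lt ht hg hlt]
  · push Not at hlt
    have hA0 : A = 0 := sum_eq_zero fun i hi => by simp [(hlt i hi).antisymm (hg i hi)]
    have hS : (1 : ℝ) ≤ #S := by exact_mod_cast card_pos.2 ⟨j, hjS⟩
    have hAB := sum_sq_sub_add_card_mul_sq_le ht.le hg
    rw [hA0, Real.sqrt_zero, zero_add, mul_pow, hsqS]
    nlinarith [pow_pos ht 2]

noncomputable def softThreshold (t : ℝ) (u : EuclideanSpace ℝ ι) : EuclideanSpace ℝ ι :=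
  WithLp.toLp 2 fun i => u i - max (-t) (min t (u i))

variable {t : ℝ}

theorem abs_sub_softThreshold_le (ht : 0 ≤ t) (u : EuclideanSpace ℝ ι) (i : ι) :
    |u i - softThreshold t u i| ≤ t := by
  simp only [softThreshold, sub_sub_cancel]
  exact abs_le.2 ⟨le_max_left _ _, max_le (by linarith) (min_le_left _ _)⟩

theorem abs_softThreshold (ht : 0 ≤ t) (u : EuclideanSpace ℝ ι) (i : ι) :
    |softThreshold t u i| = max (|u i| - t) 0 := by
  simp only [softThreshold]
  grind [abs_eq_max_neg]

variable [Fintype ι]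

theorem norm_softThreshold {S : Finset ι} (ht : 0 ≤ t) {u : EuclideanSpace ℝ ι}
    (hS : ∀ i ∈ S, t ≤ |u i|) (hSc : ∀ i ∉ S, |u i| ≤ t) :
    ‖softThreshold t u‖ = √(∑ i ∈ S, (|u i| - t) ^ 2) := by
  rw [EuclideanSpace.norm_eq]
  simp only [Real.norm_eq_abs, abs_softThreshold ht]
  rw [← sum_subset (subset_univ S) fun i _ hi => by simp [hSc i hi]]
  exact congrArg _ (sum_congr rfl fun i hi => by rw [max_eq_left (by linarith [hS i hi])])

theorem sInf_norm_add_sqrt_card_mul_iSup_lt {S : Finset ι} (ht : 0 ≤ t)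
    {u : EuclideanSpace ℝ ι} (hS : ∀ i ∈ S, t ≤ |u i|) (hSc : ∀ i ∉ S, |u i| ≤ t)
    (hne : S.Nonempty) (hu : u ≠ 0) :
    sInf {x : ℝ | ∃ a : EuclideanSpace ℝ ι, x = ‖a‖ + √(#S) * ⨆ i, |u i - a i|}
      < √2 * √(∑ i ∈ S, |u i| ^ 2) := by
  have hpos : ∃ i ∈ S, 0 < |u i| := by
    obtain ⟨i, hi⟩ : ∃ i, u i ≠ 0 := by
      by_contra! h
      exact hu (PiLp.ext h)
    obtain ⟨j, hj⟩ := hne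
    by_cases hiS : i ∈ S
    · exact ⟨i, hiS, abs_pos.2 hi⟩
    · exact ⟨j, hj, (abs_pos.2 hi).trans_le ((hSc i hiS).trans (hS j hj))⟩
  have hbdd : BddBelow {x : ℝ | ∃ a : EuclideanSpace ℝ ι, x = ‖a‖ + √(#S) * ⨆ i, |u i - a i|} := by
    refine ⟨0, ?_⟩
    rintro _ ⟨a, rfl⟩
    exact add_nonneg (norm_nonneg a)
      (mul_nonneg (Real.sqrt_nonneg _) (Real.iSup_nonneg fun i => abs_nonneg _))
  calc _ ≤ ‖softThreshold t u‖ + √(#S) * ⨆ i, |u i - softThreshold t u i| :=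
        csInf_le hbdd ⟨_, rfl⟩
    _ ≤ √(∑ i ∈ S, (|u i| - t) ^ 2) + √(#S) * t := by
        rw [norm_softThreshold ht hS hSc]
        gcongr
        exact Real.iSup_le (abs_sub_softThreshold_le ht u) ht
    _ < √2 * √(∑ i ∈ S, |u i| ^ 2) := sqrt_sum_sq_sub_add_sqrt_card_mul_lt ht hS hpos

end Thresholding

section Rearrangement

variable {d : ℕ}

noncomputable def rankPerm (u : Fin d → ℝ) : Equiv.Perm (Fin d) :=
  Fin.revPerm.trans (Tuple.sort fun j => |u j|)

theorem absDown_eq_abs_rankPerm (u : Fin d → ℝ) (i : Fin d) :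
    absDown u i = |u (rankPerm u i)| := rfl

theorem antitone_absDown (u : Fin d → ℝ) : Antitone (absDown u) :=
  fun _ _ hij => Tuple.monotone_sort (fun j => |u j|) (Fin.rev_le_rev.2 hij)

noncomputable def topIndices (u : Fin d → ℝ) (k : ℕ) : Finset (Fin d) :=
  (univ.filter fun j : Fin d => (j : ℕ) < k).map (rankPerm u).toEmbedding

theorem mem_topIndices {u : Fin d → ℝ} {k : ℕ} {i : Fin d} :
    i ∈ topIndices u k ↔ ((rankPerm u).symm i : ℕ) < k := by
  simp [topIndices]

theorem card_topIndices (u : Fin d → ℝ) {k : ℕ} (hkd : k ≤ d) : #(topIndices u k) = k := by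
  rw [topIndices, card_map, Fin.card_filter_val_lt, min_eq_right hkd]

theorem sum_Icc_zD_sq (u : Fin d → ℝ) {k : ℕ} (hkd : k ≤ d) :
    ∑ i ∈ Icc 1 k, zD u i ^ 2 = ∑ i ∈ topIndices u k, |u i| ^ 2 := by
  rw [topIndices, sum_map]
  refine sum_bij' (fun i hi => ⟨i - 1, by grind⟩) (fun j _ => j + 1) ?_ ?_ ?_ ?_ ?_
  · intro i hi
    simp at hi ⊢
    omega
  · intro j hj
    simp at hj ⊢
    omega
  · intro i hi
    simp at hi ⊢
    omega
  · intro j _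
    ext
    simp
  · intro i hi
    rw [zD, dif_pos (by grind)]
    rfl

theorem absDown_le_abs_of_mem_topIndices {u : Fin d → ℝ} {k : ℕ} (hk : 1 ≤ k) (hkd : k ≤ d)
    {i : Fin d} (hi : i ∈ topIndices u k) : absDown u ⟨k - 1, by omega⟩ ≤ |u i| := by
  rw [mem_topIndices] at hi
  have := antitone_absDown u (show (rankPerm u).symm i ≤ ⟨k - 1, by omega⟩ by grind)
  rwa [absDown_eq_abs_rankPerm u ((rankPerm u).symm i), Equiv.apply_symm_apply] at this

theorem abs_le_absDown_of_notMem_topIndices {u : Fin d → ℝ} {k : ℕ} (hk : 1 ≤ k) (hkd : k ≤ d)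
    {i : Fin d} (hi : i ∉ topIndices u k) : |u i| ≤ absDown u ⟨k - 1, by omega⟩ := by
  rw [mem_topIndices] at hi
  have := antitone_absDown u (show ⟨k - 1, by omega⟩ ≤ (rankPerm u).symm i by grind)
  rwa [absDown_eq_abs_rankPerm u ((rankPerm u).symm i), Equiv.apply_symm_apply] at this

end Rearrangement

/-- for `u ≠ 0`, the dual elastic-net norm
`inf{‖a‖₂ + √k·‖u − a‖_∞ : a}` is strictly less than `√2` times the ℓ2 norm of
the `k` largest-magnitude entries of `u`. -/
theorem statement7 (d k : ℕ) (hk1 : 1 ≤ k) (hkd : k ≤ d)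
    (u : EuclideanSpace ℝ (Fin d)) (hu : u ≠ 0) :
    sInf {x : ℝ | ∃ a : EuclideanSpace ℝ (Fin d),
        x = ‖a‖ + Real.sqrt k * ⨆ i, |u i - a i|}
      < Real.sqrt 2 * Real.sqrt (∑ i ∈ Finset.Icc 1 k, zD u i ^ 2) := by
  set S := topIndices u k
  set t := absDown u ⟨k - 1, by omega⟩
  have hS (i) (hi : i ∈ S) : t ≤ |u i| := absDown_le_abs_of_mem_topIndices hk1 hkd hi
  have hSc (i) (hi : i ∉ S) : |u i| ≤ t := abs_le_absDown_of_notMem_topIndices hk1 hkd hi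
  have hcard : #S = k := card_topIndices u hkd
  have := sInf_norm_add_sqrt_card_mul_iSup_lt (abs_nonneg _) hS hSc (card_pos.1 (by omega)) hu
  rwa [hcard, ← sum_Icc_zD_sq u hkd] at this
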